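/- arXiv:2511.22509 — 7 statements merged into one kernel-verified Lean document; each statement's English description precedes it below -/
import Mathlib

section
/- Let Q be a Hermitian operator and ρ a density operator (positive semidefinite, trace one) on a finite-dimensional complex Hilbert space. Then Tr(Q²) + (Tr(ρQ))² ≥ 2 Tr(ρQ²). -/
/-!
Diagonalizing `Q = U diag(q) U⋆` and putting `pᵢ = (U⋆ρU)ᵢᵢ`, a probability vector, the claim
becomes `2 ∑ pᵢqᵢ² ≤ ∑ qᵢ² + (∑ pᵢqᵢ)²`. With `Hᵢⱼ = qᵢ²(1 - pᵢ)pⱼ + pᵢqⱼ²(1 - pⱼ) + 2pᵢqᵢpⱼqⱼ`,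
twice the difference of the two sides is the off-diagonal sum `∑_{i ≠ j} Hᵢⱼ`, and each such
`Hᵢⱼ` is at least `(pⱼqᵢ + pᵢqⱼ)² ≥ 0` because `pᵢ + pⱼ ≤ 1`.
-/

open scoped ComplexOrder
open Matrix Unitary

theorem pair_form_nonneg {a b x y : ℝ} (ha : 0 ≤ a) (hb : 0 ≤ b) (hab : a + b ≤ 1) :
    0 ≤ x ^ 2 * (1 - a) * b + a * (y ^ 2 * (1 - b)) + 2 * (a * x) * (b * y) := by
  have hc : 0 ≤ 1 - a - b := by linarith
  nlinarith [sq_nonneg (b * x + a * y), mul_nonneg (mul_nonneg hb (sq_nonneg x)) hc,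
    mul_nonneg (mul_nonneg ha (sq_nonneg y)) hc]

theorem add_le_one_of_sum_eq_one {ι : Type*} [Fintype ι] {p : ι → ℝ} (hp : ∀ i, 0 ≤ p i)
    (hp1 : ∑ i, p i = 1) {i j : ι} (hij : i ≠ j) : p i + p j ≤ 1 := by
  classical
  rw [← Finset.sum_pair hij, ← hp1]
  exact Finset.sum_le_sum_of_subset_of_nonneg (Finset.subset_univ _) fun k _ _ ↦ hp k

theorem two_mul_sum_mul_sq_le {ι : Type*} [Fintype ι] (p q : ι → ℝ)
    (hp : ∀ i, 0 ≤ p i) (hp1 : ∑ i, p i = 1) :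
    2 * ∑ i, p i * q i ^ 2 ≤ ∑ i, q i ^ 2 + (∑ i, p i * q i) ^ 2 := by
  classical
  set H : ι → ι → ℝ := fun i j ↦
    q i ^ 2 * (1 - p i) * p j + p i * (q j ^ 2 * (1 - p j)) + 2 * (p i * q i) * (p j * q j)
  have htotal : ∑ i, ∑ j, H i j = 2 * ∑ i, q i ^ 2 * (1 - p i) + 2 * (∑ i, p i * q i) ^ 2 := by
    simp only [H, Finset.sum_add_distrib, ← Finset.mul_sum, ← Finset.sum_mul, hp1]
    ring
  have hdiag : ∑ i, H i i = 2 * ∑ i, p i * q i ^ 2 := by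
    rw [Finset.mul_sum]
    exact Finset.sum_congr rfl fun i _ ↦ by ring
  have hoff : 0 ≤ ∑ i, ∑ j ∈ Finset.univ.erase i, H i j :=
    Finset.sum_nonneg fun i _ ↦ Finset.sum_nonneg fun j hj ↦
      pair_form_nonneg (hp i) (hp j)
        (add_le_one_of_sum_eq_one hp hp1 (Finset.ne_of_mem_erase hj).symm)
  have hsplit : ∑ i, ∑ j, H i j = ∑ i, H i i + ∑ i, ∑ j ∈ Finset.univ.erase i, H i j := by
    rw [← Finset.sum_add_distrib]
    exact Finset.sum_congr rfl fun i _ ↦ (Finset.add_sum_erase _ _ (Finset.mem_univ i)).symm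
  have hS : ∑ i, q i ^ 2 * (1 - p i) = ∑ i, q i ^ 2 - ∑ i, p i * q i ^ 2 := by
    rw [← Finset.sum_sub_distrib]
    exact Finset.sum_congr rfl fun i _ ↦ by ring
  linarith

theorem re_trace_mul_conjStarAlgAut_diagonal {n : Type*} [Fintype n] [DecidableEq n]
    (B : Matrix n n ℂ) (U : unitary (Matrix n n ℂ)) (f : n → ℝ) :
    (B * conjStarAlgAut ℂ _ U (diagonal fun i ↦ (f i : ℂ))).trace.re
      = ∑ i, ((star (U : Matrix n n ℂ) * B * U) i i).re * f i := by
  rw [conjStarAlgAut_apply, ← mul_assoc, ← mul_assoc, trace_mul_comm]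
  simp [trace, mul_diagonal, ← mul_assoc]

/-- For a Hermitian operator `Q` and a density operator `ρ` (positive
semidefinite, trace one) on a finite-dimensional complex Hilbert space,
`Tr(Q²) + (Tr(ρQ))² ≥ 2 Tr(ρQ²)`. -/
theorem stmt0 {d : ℕ} (Q ρ : Matrix (Fin d) (Fin d) ℂ)
    (hQ : Q.IsHermitian) (hρ : ρ.PosSemidef) (hρtr : ρ.trace = 1) :
    ((Q * Q).trace.re) + ((ρ * Q).trace.re) ^ 2 ≥ 2 * ((ρ * (Q * Q)).trace.re) := by
  set U := hQ.eigenvectorUnitary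
  set q := hQ.eigenvalues
  set σ := star (U : Matrix (Fin d) (Fin d) ℂ) * ρ * U
  have hQ1 : Q = conjStarAlgAut ℂ _ U (diagonal fun i ↦ (q i : ℂ)) := hQ.spectral_theorem
  have hQ2 : Q * Q = conjStarAlgAut ℂ _ U (diagonal fun i ↦ ((q i ^ 2 : ℝ) : ℂ)) := by
    rw [hQ1, ← map_mul, diagonal_mul_diagonal]
    simp [sq]
  have hσ : σ.PosSemidef := by
    simp only [σ, star_eq_conjTranspose]
    exact hρ.conjTranspose_mul_mul_same _
  have hp (i : Fin d) : 0 ≤ (σ i i).re := (Complex.nonneg_iff.mp hσ.diag_nonneg).1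
  have hp1 : ∑ i, (σ i i).re = 1 := by
    have hσtr : σ.trace = 1 := by
      simp only [σ]
      rw [trace_mul_cycle, mul_star_self_of_mem U.2, one_mul, hρtr]
    rw [← Complex.re_sum]
    exact congrArg Complex.re hσtr
  have htrQQ : (Q * Q).trace.re = ∑ i, q i ^ 2 := by
    have h := re_trace_mul_conjStarAlgAut_diagonal 1 U fun i ↦ q i ^ 2
    rw [one_mul, ← hQ2, mul_one, star_mul_self_of_mem U.2] at h
    simpa only [one_apply_eq, Complex.one_re, one_mul] using h
  rw [ge_iff_le, htrQQ, hQ2, re_trace_mul_conjStarAlgAut_diagonal, hQ1,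
    re_trace_mul_conjStarAlgAut_diagonal]
  exact two_mul_sum_mul_sq_le (fun i ↦ (σ i i).re) q hp hp1
end

section
/- Let ρ and σ be density operators on a finite-dimensional complex Hilbert space and let Δ = ρ − σ. Then ‖Δ‖₁² ≥ 2‖Δ‖₂², where ‖·‖₁ is the trace norm and ‖·‖₂ is the Hilbert–Schmidt (Frobenius) norm. Moreover, equality holds if and only if rank(Δ) ≤ 2. -/
/-!
Split the eigenvalues of `Δ` as `λ = λ⁺ - λ⁻`. As `Tr Δ = 0`, `∑ λ⁺ = ∑ λ⁻ = ‖Δ‖₁ / 2`, and since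
`λ⁺ λ⁻ = 0`, `‖Δ‖₂² = ∑ (λ⁺)² + ∑ (λ⁻)² ≤ (∑ λ⁺)² + (∑ λ⁻)² = ‖Δ‖₁² / 2`. Equality holds iff each
of `λ⁺`, `λ⁻` has at most one nonzero entry; a traceless `Δ` of rank at most two has this property
because its (at most two) nonzero eigenvalues cannot have the same sign.
-/

open Finset

section

variable {ι R : Type*} [Fintype ι]

theorem sq_sum_eq_sum_sq_add_sum_erase [DecidableEq ι] [CommSemiring R] (f : ι → R) :
    (∑ i, f i) ^ 2 = ∑ i, f i ^ 2 + ∑ i, ∑ j ∈ univ.erase i, f i * f j := by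
  rw [sq, sum_mul_sum, ← sum_add_distrib]
  refine sum_congr rfl fun i _ => ?_
  rw [sq, add_sum_erase _ (fun j => f i * f j) (mem_univ i)]

variable [CommRing R] [LinearOrder R] [IsStrictOrderedRing R]

theorem sq_sum_eq_sum_sq_iff_card_support_le_one {f : ι → R} (hf : ∀ i, 0 ≤ f i) :
    (∑ i, f i) ^ 2 = ∑ i, f i ^ 2 ↔ #{i | f i ≠ 0} ≤ 1 := by
  classical
  have hprod : ∀ i j, 0 ≤ f i * f j := fun i j => mul_nonneg (hf i) (hf j)
  rw [sq_sum_eq_sum_sq_add_sum_erase, add_eq_left,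
    sum_eq_zero_iff_of_nonneg fun i _ => sum_nonneg fun j _ => hprod i j, card_le_one]
  simp only [sum_eq_zero_iff_of_nonneg fun _ _ => hprod _ _, mem_univ, mem_erase, mem_filter,
    true_and, and_true, mul_eq_zero, forall_const]
  constructor
  · intro h i hi j hj
    by_contra hij
    rcases h i j (Ne.symm hij) with h | h <;> contradiction
  · intro h i j hji
    by_contra! hne
    exact hji (h j hne.2 i hne.1)

variable {f : ι → R}

theorem card_support_posPart_le_one_of_sum_eq_zero (hsum : ∑ i, f i = 0)
    (hcard : #{i | f i ≠ 0} ≤ 2) : #{i | (f i)⁺ ≠ 0} ≤ 1 := by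
  by_contra! hpos
  have hsub : univ.filter (fun i => (f i)⁺ ≠ 0) ⊆ univ.filter (fun i => f i ≠ 0) :=
    monotone_filter_right _ fun i _ hi h0 => hi (by rw [h0, posPart_zero])
  have heq := eq_of_subset_of_card_le hsub (by omega)
  have hnonneg : ∀ i, 0 ≤ f i := by
    intro i
    by_contra! hneg
    have hi : i ∈ univ.filter (fun i => (f i)⁺ ≠ 0) := heq ▸ by simp [hneg.ne]
    simp only [mem_filter, mem_univ, true_and, ne_eq, posPart_eq_zero, not_le] at hi
    exact hi.not_gt hneg
  have hzero : ∀ i, f i = 0 := by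
    simpa using (sum_eq_zero_iff_of_nonneg fun i _ => hnonneg i).mp hsum
  simp [hzero] at hpos

theorem card_support_le_two_iff_of_sum_eq_zero (hsum : ∑ i, f i = 0) :
    #{i | f i ≠ 0} ≤ 2 ↔ #{i | (f i)⁺ ≠ 0} ≤ 1 ∧ #{i | (f i)⁻ ≠ 0} ≤ 1 := by
  classical
  constructor
  · intro hcard
    refine ⟨card_support_posPart_le_one_of_sum_eq_zero hsum hcard, ?_⟩
    simpa only [posPart_neg, ne_eq, neg_eq_zero] using
      card_support_posPart_le_one_of_sum_eq_zero (f := fun i => -f i)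
        (by rw [sum_neg_distrib, hsum, neg_zero]) (by simpa only [ne_eq, neg_eq_zero])
  · rintro ⟨hpos, hneg⟩
    have hsplit : univ.filter (fun i => f i ≠ 0) =
        univ.filter (fun i => (f i)⁺ ≠ 0) ∪ univ.filter (fun i => (f i)⁻ ≠ 0) := by
      rw [← filter_or]
      refine filter_congr fun i _ => ?_
      rw [ne_eq, ne_eq, ne_eq, posPart_eq_zero, negPart_eq_zero, ← not_and_or, ← le_antisymm_iff]
    rw [hsplit]
    exact (card_union_le _ _).trans (by omega)

theorem sq_sum_abs_eq_of_sum_eq_zero (hsum : ∑ i, f i = 0) :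
    (∑ i, |f i|) ^ 2 = 2 * ∑ i, f i ^ 2 + 2 * ((∑ i, (f i)⁺) ^ 2 - ∑ i, (f i)⁺ ^ 2) +
      2 * ((∑ i, (f i)⁻) ^ 2 - ∑ i, (f i)⁻ ^ 2) := by
  have hparts : ∑ i, (f i)⁺ = ∑ i, (f i)⁻ := by
    rw [← sub_eq_zero, ← sum_sub_distrib, ← hsum]
    exact sum_congr rfl fun i _ => posPart_sub_negPart (f i)
  have habs : ∑ i, |f i| = ∑ i, (f i)⁺ + ∑ i, (f i)⁻ := by
    rw [← sum_add_distrib]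
    exact sum_congr rfl fun i _ => (posPart_add_negPart (f i)).symm
  have hsq : ∑ i, f i ^ 2 = ∑ i, (f i)⁺ ^ 2 + ∑ i, (f i)⁻ ^ 2 := by
    rw [← sum_add_distrib]
    refine sum_congr rfl fun i _ => ?_
    have hdisj : (f i)⁺ * (f i)⁻ = 0 := by
      rcases le_total (f i) 0 with h | h
      · rw [posPart_eq_zero.mpr h, zero_mul]
      · rw [negPart_eq_zero.mpr h, mul_zero]
    linear_combination -congrArg (· ^ 2) (posPart_sub_negPart (f i)) - 2 * hdisj
  rw [habs, hsq, ← hparts]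
  ring

theorem two_mul_sum_sq_le_sq_sum_abs_of_sum_eq_zero (hsum : ∑ i, f i = 0) :
    2 * ∑ i, f i ^ 2 ≤ (∑ i, |f i|) ^ 2 := by
  have hpos := sum_sq_le_sq_sum_of_nonneg (s := univ) fun i _ => posPart_nonneg (f i)
  have hneg := sum_sq_le_sq_sum_of_nonneg (s := univ) fun i _ => negPart_nonneg (f i)
  rw [sq_sum_abs_eq_of_sum_eq_zero hsum]
  linarith

theorem sq_sum_abs_eq_two_mul_sum_sq_iff_of_sum_eq_zero (hsum : ∑ i, f i = 0) :
    (∑ i, |f i|) ^ 2 = 2 * ∑ i, f i ^ 2 ↔ #{i | f i ≠ 0} ≤ 2 := by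
  have hpos := sum_sq_le_sq_sum_of_nonneg (s := univ) fun i _ => posPart_nonneg (f i)
  have hneg := sum_sq_le_sq_sum_of_nonneg (s := univ) fun i _ => negPart_nonneg (f i)
  rw [card_support_le_two_iff_of_sum_eq_zero hsum,
    ← sq_sum_eq_sum_sq_iff_card_support_le_one fun i => posPart_nonneg (f i),
    ← sq_sum_eq_sum_sq_iff_card_support_le_one fun i => negPart_nonneg (f i),
    sq_sum_abs_eq_of_sum_eq_zero hsum]
  constructor
  · intro h
    constructor <;> linarith
  · rintro ⟨h1, h2⟩
    rw [h1, h2]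
    ring

end

namespace Matrix

variable {n 𝕜 : Type*} [Fintype n] [DecidableEq n] [RCLike 𝕜]

theorem trace_conjStarAlgAut (u : unitary (Matrix n n 𝕜)) (A : Matrix n n 𝕜) :
    (Unitary.conjStarAlgAut 𝕜 _ u A).trace = A.trace := by
  rw [Unitary.conjStarAlgAut_apply, trace_mul_cycle, Unitary.coe_star_mul_self, one_mul]

theorem IsHermitian.trace_mul_self {A : Matrix n n 𝕜} (hA : A.IsHermitian) :
    (A * A).trace = ∑ i, (hA.eigenvalues i : 𝕜) ^ 2 := by
  conv_lhs => rw [hA.spectral_theorem, ← map_mul]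
  rw [trace_conjStarAlgAut, diagonal_mul_diagonal, trace_diagonal]
  simp [sq]

end Matrix

open scoped ComplexOrder

theorem stmt1_general {d : ℕ} (ρ σ : Matrix (Fin d) (Fin d) ℂ)
    (hρtr : ρ.trace = 1) (hσtr : σ.trace = 1)
    (hΔ : (ρ - σ).IsHermitian) :
    (∑ i, |hΔ.eigenvalues i|) ^ 2 ≥ 2 * ((ρ - σ) * (ρ - σ)).trace.re ∧
    ((∑ i, |hΔ.eigenvalues i|) ^ 2 = 2 * ((ρ - σ) * (ρ - σ)).trace.re ↔
      (ρ - σ).rank ≤ 2) := by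
  have hsum : ∑ i, hΔ.eigenvalues i = 0 := by
    have htrace := hΔ.trace_eq_sum_eigenvalues
    rw [Matrix.trace_sub, hρtr, hσtr, sub_self] at htrace
    exact RCLike.ofReal_eq_zero.mp (by push_cast; exact htrace.symm)
  have hsq : ((ρ - σ) * (ρ - σ)).trace.re = ∑ i, hΔ.eigenvalues i ^ 2 := by
    rw [hΔ.trace_mul_self, Complex.re_sum]
    norm_cast
  rw [hsq, hΔ.rank_eq_card_non_zero_eigs, Fintype.card_subtype]
  exact ⟨two_mul_sum_sq_le_sq_sum_abs_of_sum_eq_zero hsum,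
    sq_sum_abs_eq_two_mul_sum_sq_iff_of_sum_eq_zero hsum⟩

/-- For density operators `ρ, σ` and `Δ = ρ − σ`,
`‖Δ‖₁² ≥ 2‖Δ‖₂²` (trace norm vs Hilbert–Schmidt norm), with equality
iff `rank Δ ≤ 2`. The trace norm is the sum of absolute values of the
eigenvalues and `‖Δ‖₂² = Tr(Δ²)`. -/
theorem stmt1 {d : ℕ} (ρ σ : Matrix (Fin d) (Fin d) ℂ)
    (hρ : ρ.PosSemidef) (hσ : σ.PosSemidef)
    (hρtr : ρ.trace = 1) (hσtr : σ.trace = 1)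
    (hΔ : (ρ - σ).IsHermitian) :
    (∑ i, |hΔ.eigenvalues i|) ^ 2 ≥ 2 * ((ρ - σ) * (ρ - σ)).trace.re ∧
    ((∑ i, |hΔ.eigenvalues i|) ^ 2 = 2 * ((ρ - σ) * (ρ - σ)).trace.re ↔
      (ρ - σ).rank ≤ 2) :=
  stmt1_general ρ σ hρtr hσtr hΔ
end

section
/- Let Δ be a traceless Hermitian d×d matrix with at most one negative eigenvalue (e.g. Δ = ρ − σ with ρ a density matrix and σ a rank-one projection). Then ‖Δ‖₁² ≤ 4(d−1)/d · ‖Δ‖₂², i.e. ‖Δ‖₂² ≥ d/(4(d−1)) · ‖Δ‖₁². -/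
/-!
If the nonnegative eigenvalues sum to `S`, the trace condition forces the remaining one to be `-S`,
so `‖Δ‖₁ = 2S` and `‖Δ‖₂² = S² + T`, where `T` is the sum of squares of the other `d - 1`
eigenvalues. Cauchy–Schwarz gives `S² ≤ (d - 1) T`, which is exactly `4S² ≤ 4(d-1)/d · (S² + T)`.
-/

open Finset

lemma Matrix.IsHermitian.trace_mul_self_s2 {𝕜 n : Type*} [RCLike 𝕜] [Fintype n] [DecidableEq n]
    {A : Matrix n n 𝕜} (hA : A.IsHermitian) :
    (A * A).trace = ∑ i, (hA.eigenvalues i : 𝕜) ^ 2 := by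
  conv_lhs => rw [hA.spectral_theorem, ← map_mul, Unitary.conjStarAlgAut_apply,
    Matrix.trace_mul_cycle, Unitary.coe_star_mul_self, one_mul, Matrix.diagonal_mul_diagonal,
    Matrix.trace_diagonal]
  simp [sq]

lemma sq_sum_abs_le_of_sum_eq_zero {ι : Type*} [Fintype ι] {μ : ι → ℝ} (hsum : ∑ i, μ i = 0)
    {j : ι} (hj : ∀ i, i ≠ j → 0 ≤ μ i) :
    (∑ i, |μ i|) ^ 2 ≤ 4 * ((Fintype.card ι : ℝ) - 1) / Fintype.card ι * ∑ i, μ i ^ 2 := by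
  classical
  have hcard : 0 < Fintype.card ι := Fintype.card_pos_iff.mpr ⟨j⟩
  set S := ∑ i ∈ univ.erase j, μ i
  set T := ∑ i ∈ univ.erase j, μ i ^ 2
  have hS : 0 ≤ S := sum_nonneg fun i hi ↦ hj i (ne_of_mem_erase hi)
  have hμj : μ j = -S := by
    rw [← add_sum_erase univ μ (mem_univ j)] at hsum; linarith
  have habs : ∑ i, |μ i| = 2 * S := by
    rw [← add_sum_erase univ _ (mem_univ j), hμj, abs_neg, abs_of_nonneg hS,
      sum_congr rfl fun i hi ↦ abs_of_nonneg (hj i (ne_of_mem_erase hi))]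
    ring
  have hsq : ∑ i, μ i ^ 2 = S ^ 2 + T := by
    rw [← add_sum_erase univ _ (mem_univ j), hμj, neg_sq]
  have hCS : S ^ 2 ≤ ((Fintype.card ι : ℝ) - 1) * T := by
    have := sq_sum_le_card_mul_sum_sq (s := univ.erase j) (f := μ)
    rwa [card_erase_of_mem (mem_univ j), card_univ, Nat.cast_sub hcard, Nat.cast_one] at this
  rw [habs, hsq, div_mul_eq_mul_div, le_div_iff₀ (by exact_mod_cast hcard)]
  nlinarith

theorem stmt2_general {d : ℕ} (Δ : Matrix (Fin d) (Fin d) ℂ)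
    (hΔ : Δ.IsHermitian) (htr : Δ.trace = 0)
    (hneg : ∃ j, ∀ i, i ≠ j → 0 ≤ hΔ.eigenvalues i) :
    (∑ i, |hΔ.eigenvalues i|) ^ 2 ≤ 4 * ((d : ℝ) - 1) / d * ((Δ * Δ).trace.re) := by
  obtain ⟨j, hj⟩ := hneg
  have hsum : ∑ i, hΔ.eigenvalues i = 0 := by
    simpa [htr, eq_comm] using congrArg Complex.re hΔ.trace_eq_sum_eigenvalues
  have hsq : (Δ * Δ).trace.re = ∑ i, hΔ.eigenvalues i ^ 2 := by
    simp [hΔ.trace_mul_self_s2, ← Complex.ofReal_pow]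
  simpa [hsq] using sq_sum_abs_le_of_sum_eq_zero hsum hj

/-- If `Δ` is a traceless Hermitian `d×d` matrix with at most one
negative eigenvalue, then `‖Δ‖₁² ≤ 4(d−1)/d · ‖Δ‖₂²`, where `‖Δ‖₁` is the sum of
the absolute values of the eigenvalues and `‖Δ‖₂² = Tr(Δ²)`. -/
theorem stmt2 {d : ℕ} (hd : 0 < d) (Δ : Matrix (Fin d) (Fin d) ℂ)
    (hΔ : Δ.IsHermitian) (htr : Δ.trace = 0)
    (hneg : ∃ j, ∀ i, i ≠ j → 0 ≤ hΔ.eigenvalues i) :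
    (∑ i, |hΔ.eigenvalues i|) ^ 2 ≤ 4 * ((d : ℝ) - 1) / d * ((Δ * Δ).trace.re) :=
  stmt2_general Δ hΔ htr hneg
end

section
/- Let σ be a rank-one orthogonal projection (pure state) and ρ a density operator on a d-dimensional complex Hilbert space; set ε = 1 − Tr(ρσ) and Δ = ρ − σ. Then ‖Δ‖₂² ≥ (d/(d−1)) ε², with equality if and only if ρ = (1−ε)σ + ε(1−σ)/(d−1). -/
/-!
With `τ = (1 - ε) σ + ε (1 - σ) / (d - 1)`, the difference `ρ - σ` splits as `(ρ - τ) + (τ - σ)`,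
and the two pieces are orthogonal for the Hilbert–Schmidt inner product: `τ - σ` is a combination
of `σ` and `1`, and `ρ`, `τ` have the same trace and the same overlap `1 - ε` with `σ`.
The second piece has squared norm `ε² + ε² / (d - 1) = d ε² / (d - 1)`, and the first has a
nonnegative squared norm, vanishing exactly when `ρ = τ`.
-/

open scoped ComplexOrder

namespace Matrix

variable {n : Type*} [Fintype n]

section RCLike

variable {𝕜 : Type*} [RCLike 𝕜]

lemma IsHermitian.ofReal_re_trace_mul {A B : Matrix n n 𝕜} (hA : A.IsHermitian)
    (hB : B.IsHermitian) : (RCLike.re (A * B).trace : 𝕜) = (A * B).trace := by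
  rw [← RCLike.conj_eq_iff_re, ← RCLike.star_def, ← trace_conjTranspose, conjTranspose_mul,
    hA.eq, hB.eq, trace_mul_comm]

lemma IsHermitian.trace_mul_self_nonneg {M : Matrix n n 𝕜} (hM : M.IsHermitian) :
    0 ≤ (M * M).trace := by
  simpa only [hM.eq] using (posSemidef_conjTranspose_mul_self M).trace_nonneg

lemma IsHermitian.re_trace_mul_self_eq_zero_iff {M : Matrix n n 𝕜} (hM : M.IsHermitian) :
    RCLike.re (M * M).trace = 0 ↔ M = 0 := by
  have him := (RCLike.nonneg_iff.mp hM.trace_mul_self_nonneg).2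
  rw [← trace_conjTranspose_mul_self_eq_zero_iff, hM.eq, ← RCLike.re_add_im (M * M).trace, him]
  simp

end RCLike

variable {K : Type*} [Field K] [DecidableEq n]

def isotropicMixture (σ : Matrix n n K) (ε : K) : Matrix n n K :=
  (1 - ε) • σ + (ε / (Fintype.card n - 1)) • (1 - σ)

lemma trace_sub_mul_sub_eq_trace_sub_isotropicMixture {σ ρ : Matrix n n K} {ε : K}
    (hσ2 : σ * σ = σ) (hσtr : σ.trace = 1) (hρtr : ρ.trace = 1) (hρσ : (ρ * σ).trace = 1 - ε)
    (hn : (Fintype.card n : K) - 1 ≠ 0) :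
    ((ρ - σ) * (ρ - σ)).trace =
      ((ρ - isotropicMixture σ ε) * (ρ - isotropicMixture σ ε)).trace +
        Fintype.card n / (Fintype.card n - 1) * ε ^ 2 := by
  have hσρ : (σ * ρ).trace = 1 - ε := trace_mul_comm σ ρ ▸ hρσ
  simp only [isotropicMixture, sub_mul, mul_sub, add_mul, mul_add, smul_mul_assoc, mul_smul_comm,
    mul_one, one_mul, trace_sub, trace_add, trace_smul, smul_eq_mul, hσ2, hσρ, hρσ, hρtr, hσtr,
    trace_one]
  field_simp
  ring

lemma IsHermitian.isotropicMixture {𝕜 : Type*} [RCLike 𝕜] {σ : Matrix n n 𝕜} (hσ : σ.IsHermitian)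
    (ε : ℝ) : (isotropicMixture σ (ε : 𝕜)).IsHermitian := by
  simp [Matrix.isotropicMixture, IsHermitian, conjTranspose_add, conjTranspose_smul, hσ.eq]

end Matrix

open Matrix

/-- For a rank-one orthogonal projection (pure state) `σ` and a density
operator `ρ` on a `d`-dimensional complex Hilbert space, with `ε = 1 − Tr(ρσ)` and
`Δ = ρ − σ`, one has `‖Δ‖₂² ≥ (d/(d−1)) ε²`, with equality iff
`ρ = (1−ε)σ + ε(1−σ)/(d−1)`. -/
theorem stmt3 {d : ℕ} (hd : 2 ≤ d) (σ ρ : Matrix (Fin d) (Fin d) ℂ)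
    (hσH : σ.IsHermitian) (hσ2 : σ * σ = σ) (hσtr : σ.trace = 1)
    (hρ : ρ.PosSemidef) (hρtr : ρ.trace = 1)
    (ε : ℝ) (hε : ε = 1 - ((ρ * σ).trace.re)) :
    ((ρ - σ) * (ρ - σ)).trace.re ≥ ((d : ℝ) / (d - 1)) * ε ^ 2 ∧
    (((ρ - σ) * (ρ - σ)).trace.re = ((d : ℝ) / (d - 1)) * ε ^ 2 ↔
      ρ = ((1 - ε : ℝ) : ℂ) • σ + ((ε / ((d : ℝ) - 1) : ℝ) : ℂ) • (1 - σ)) := by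
  have hd1 : (Fintype.card (Fin d) : ℂ) - 1 ≠ 0 := by
    rw [Fintype.card_fin, sub_ne_zero]
    norm_cast
    omega
  have hρσ : (ρ * σ).trace = 1 - (ε : ℂ) := by
    rw [← hρ.1.ofReal_re_trace_mul hσH, hε]
    simp
  have hτ : isotropicMixture σ (ε : ℂ) =
      ((1 - ε : ℝ) : ℂ) • σ + ((ε / ((d : ℝ) - 1) : ℝ) : ℂ) • (1 - σ) := by
    simp [isotropicMixture]
  have hM : (ρ - isotropicMixture σ (ε : ℂ)).IsHermitian := hρ.1.sub (hσH.isotropicMixture ε)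
  have hdecomp : ((ρ - σ) * (ρ - σ)).trace.re =
      ((ρ - isotropicMixture σ (ε : ℂ)) * (ρ - isotropicMixture σ (ε : ℂ))).trace.re +
        (d : ℝ) / (d - 1) * ε ^ 2 := by
    rw [trace_sub_mul_sub_eq_trace_sub_isotropicMixture hσ2 hσtr hρtr hρσ hd1, Fintype.card_fin]
    norm_cast
  have hnonneg := (RCLike.nonneg_iff.mp hM.trace_mul_self_nonneg).1
  rw [RCLike.re_to_complex] at hnonneg
  rw [hdecomp, ← hτ, ← sub_eq_zero (a := ρ), ← hM.re_trace_mul_self_eq_zero_iff,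
    RCLike.re_to_complex]
  exact ⟨by linarith, add_eq_right⟩
end

section
/- Let σ be a rank-one orthogonal projection and ρ a density operator on a d-dimensional complex Hilbert space with ε = 1 − Tr(ρσ). Then Tr(ρ²) ≥ (1−ε)² + ε²/(d−1). -/
/-!
Expanding `0 ≤ Tr(A²)` for the Hermitian matrix `A = ρ - a σ - b (1 - σ)` gives
`Tr(ρ²) ≥ 2a f + 2b (1 - f) - a² - b² (d - 1)` with `f = Tr(ρσ)`, for all real `a`, `b`.
The bound is the value at the maximizing choice `a = f = 1 - ε`, `b = ε / (d - 1)`.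
-/

open scoped ComplexOrder
open Matrix

theorem Matrix.IsHermitian.re_trace_mul_self_nonneg {n 𝕜 : Type*} [Fintype n] [RCLike 𝕜]
    {A : Matrix n n 𝕜} (hA : A.IsHermitian) : 0 ≤ RCLike.re (A * A).trace := by
  simpa [hA.eq] using
    (RCLike.nonneg_iff.mp (posSemidef_conjTranspose_mul_self A).trace_nonneg).1

theorem Matrix.trace_sub_smul_sub_smul_one_sub_sq {n R : Type*} [Fintype n] [DecidableEq n]
    [CommRing R] {P : Matrix n n R} (hP : P * P = P) (X : Matrix n n R) (a b : R) :
    ((X - a • P - b • (1 - P)) * (X - a • P - b • (1 - P))).trace =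
      (X * X).trace - 2 * a * (X * P).trace - 2 * b * (X.trace - (X * P).trace)
        + a ^ 2 * P.trace + b ^ 2 * (Fintype.card n - P.trace) := by
  have hPX : (P * X).trace = (X * P).trace := trace_mul_comm P X
  simp only [sub_mul, mul_sub, Matrix.smul_mul, Matrix.mul_smul, one_mul, mul_one, hP,
    smul_smul, trace_sub, trace_smul, trace_one, hPX, smul_eq_mul]
  ring

theorem Matrix.IsHermitian.re_trace_mul_self_ge_of_rankOne_proj {n : Type*} [Fintype n]
    [DecidableEq n] {X P : Matrix n n ℂ} (hX : X.IsHermitian) (hXtr : X.trace = 1)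
    (hPH : P.IsHermitian) (hP : P * P = P) (hPtr : P.trace = 1) (a b : ℝ) :
    2 * a * (X * P).trace.re + 2 * b * (1 - (X * P).trace.re) - a ^ 2
        - b ^ 2 * (Fintype.card n - 1) ≤ (X * X).trace.re := by
  have hA : (X - (a : ℂ) • P - (b : ℂ) • (1 - P)).IsHermitian :=
    (hX.sub (hPH.smul (Complex.conj_ofReal a))).sub
      ((isHermitian_one.sub hPH).smul (Complex.conj_ofReal b))
  have h := hA.re_trace_mul_self_nonneg
  rw [trace_sub_smul_sub_smul_one_sub_sq hP, hXtr, hPtr] at h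
  simp [← Complex.ofReal_pow] at h
  linarith

/-- For a rank-one orthogonal projection `σ` and a density operator `ρ`
on a `d`-dimensional complex Hilbert space (`d ≥ 2`), with `ε = 1 − Tr(ρσ)`, the
purity satisfies `Tr(ρ²) ≥ (1−ε)² + ε²/(d−1)`. -/
theorem stmt7 {d : ℕ} (hd : 2 ≤ d) (σ ρ : Matrix (Fin d) (Fin d) ℂ)
    (hσH : σ.IsHermitian) (hσ2 : σ * σ = σ) (hσtr : σ.trace = 1)
    (hρ : ρ.PosSemidef) (hρtr : ρ.trace = 1)
    (ε : ℝ) (hε : ε = 1 - ((ρ * σ).trace.re)) :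
    (ρ * ρ).trace.re ≥ (1 - ε) ^ 2 + ε ^ 2 / ((d : ℝ) - 1) := by
  have hd1 : (0 : ℝ) < d - 1 := by
    have : (2 : ℝ) ≤ d := by exact_mod_cast hd
    linarith
  have h := hρ.isHermitian.re_trace_mul_self_ge_of_rankOne_proj hρtr hσH hσ2 hσtr
    (1 - ε) (ε / (d - 1))
  rw [Fintype.card_fin, show (ρ * σ).trace.re = 1 - ε by linarith] at h
  have hbound : ε ^ 2 / ((d : ℝ) - 1) =
      2 * (ε / (d - 1)) * ε - (ε / (d - 1)) ^ 2 * (d - 1) := by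
    field_simp
    ring
  rw [ge_iff_le, hbound]
  linarith
end

section
/- Let A, B be traceless Hermitian operators on a d-dimensional complex Hilbert space and let W_π be the permutation operator on the 4-fold tensor power associated with any permutation π ∈ S₄. Then |Tr(W_π (A⊗B⊗A⊗B))| ≤ ‖A‖₂² ‖B‖₂². -/
/-- The permutation operator `W_π` on the 4-fold tensor power `(ℂ^d)^⊗4`, acting by
`W_π (v₁⊗v₂⊗v₃⊗v₄) = v_{π⁻¹(1)} ⊗ v_{π⁻¹(2)} ⊗ v_{π⁻¹(3)} ⊗ v_{π⁻¹(4)}`, written as a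
matrix with respect to the product basis indexed by `Fin 4 → Fin d`. -/
def permOp4 {d : ℕ} (π : Equiv.Perm (Fin 4)) :
    Matrix (Fin 4 → Fin d) (Fin 4 → Fin d) ℂ :=
  Matrix.of fun i j => if (∀ k, i k = j (π⁻¹ k)) then 1 else 0

/-- The tensor product `A ⊗ B ⊗ A ⊗ B` as a matrix on `(ℂ^d)^⊗4`, with the 4-fold
tensor power identified with matrices indexed by `Fin 4 → Fin d`. -/
def tensABAB {d : ℕ} (A B : Matrix (Fin d) (Fin d) ℂ) :
    Matrix (Fin 4 → Fin d) (Fin 4 → Fin d) ℂ :=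
  Matrix.of fun i j => A (i 0) (j 0) * B (i 1) (j 1) * A (i 2) (j 2) * B (i 3) (j 3)

/-!
A fixed point `k` of `π` splits `Tr (W_π (M₀ ⊗ M₁ ⊗ M₂ ⊗ M₃))` into `Tr M_k` times a trace over
the remaining factors, so it vanishes for traceless factors; conjugating `π` only relabels the
factors. A fixed-point-free `π ∈ S₄` is conjugate to the 4-cycle, giving `Tr (M₃ M₂ M₁ M₀)`, or to
`(0 1)(2 3)`, giving `Tr (M₁ M₀) Tr (M₃ M₂)`. Both are at most `∏ ‖M_k‖₂`, by Cauchy–Schwarz for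
`Tr (X Y) = ⟪Xᴴ, Y⟫` and submultiplicativity of the Hilbert–Schmidt norm, and for Hermitian `A`
we have `‖A‖₂² = Tr (A A)`.
-/

open Finset
open scoped Matrix.Norms.Frobenius InnerProductSpace

set_option maxRecDepth 4000 in
lemma Equiv.Perm.exists_conj_eq_finRotate_or_swap_mul_swap {π : Equiv.Perm (Fin 4)}
    (hπ : ∀ k, π k ≠ k) :
    (∃ σ : Equiv.Perm (Fin 4), π = σ * finRotate 4 * σ⁻¹) ∨
      ∃ σ : Equiv.Perm (Fin 4), π = σ * (Equiv.swap 0 1 * Equiv.swap 2 3) * σ⁻¹ := by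
  revert π
  decide

lemma sum_pi_fin_four {ι M : Type*} [Fintype ι] [AddCommMonoid M] (F : (Fin 4 → ι) → M) :
    ∑ i, F i = ∑ a, ∑ b, ∑ c, ∑ e, F ![a, b, c, e] := by
  simp only [← (Fin.consEquiv fun _ => ι).sum_comp, Fintype.sum_prod_type, Fintype.sum_unique]
  congr!

namespace Matrix

section Frobenius

variable {m n 𝕜 : Type*} [Fintype m] [Fintype n] [RCLike 𝕜]

def frobeniusVec (X : Matrix m n 𝕜) : PiLp 2 fun _ : m => EuclideanSpace 𝕜 n :=
  WithLp.toLp 2 fun i => WithLp.toLp 2 (X i)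

lemma norm_frobeniusVec (X : Matrix m n 𝕜) : ‖X.frobeniusVec‖ = ‖X‖ := rfl

lemma trace_mul_eq_inner_frobeniusVec (X : Matrix m n 𝕜) (Y : Matrix n m 𝕜) :
    (X * Y).trace = ⟪Xᴴ.frobeniusVec, Y.frobeniusVec⟫_𝕜 := by
  simp only [PiLp.inner_apply, frobeniusVec, trace, diag, mul_apply, conjTranspose_apply,
    RCLike.inner_apply, RCLike.star_def, RCLike.conj_conj]
  rw [sum_comm]
  exact sum_congr rfl fun _ _ => sum_congr rfl fun _ _ => mul_comm _ _

lemma norm_trace_mul_le (X : Matrix m n 𝕜) (Y : Matrix n m 𝕜) :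
    ‖(X * Y).trace‖ ≤ ‖X‖ * ‖Y‖ := by
  rw [trace_mul_eq_inner_frobeniusVec, ← frobenius_norm_conjTranspose X]
  exact norm_inner_le_norm _ _

lemma frobenius_norm_sq_eq_re_trace (X : Matrix m n 𝕜) :
    ‖X‖ ^ 2 = RCLike.re (Xᴴ * X).trace := by
  rw [trace_mul_eq_inner_frobeniusVec, conjTranspose_conjTranspose, inner_self_eq_norm_sq_to_K,
    norm_frobeniusVec]
  norm_cast

lemma IsHermitian.frobenius_norm_sq {A : Matrix n n 𝕜} (hA : A.IsHermitian) :
    ‖A‖ ^ 2 = RCLike.re (A * A).trace := by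
  simpa only [hA.eq] using frobenius_norm_sq_eq_re_trace A

lemma norm_trace_mul_mul_mul_le {l p : Type*} [Fintype l] [Fintype p] (W : Matrix l m 𝕜)
    (X : Matrix m n 𝕜) (Y : Matrix n p 𝕜) (Z : Matrix p l 𝕜) :
    ‖(W * X * Y * Z).trace‖ ≤ ‖W‖ * ‖X‖ * ‖Y‖ * ‖Z‖ := by
  calc ‖(W * X * Y * Z).trace‖ = ‖((W * X) * (Y * Z)).trace‖ := by rw [Matrix.mul_assoc]
    _ ≤ ‖W * X‖ * ‖Y * Z‖ := norm_trace_mul_le _ _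
    _ ≤ (‖W‖ * ‖X‖) * (‖Y‖ * ‖Z‖) := by gcongr <;> exact frobenius_norm_mul _ _
    _ = ‖W‖ * ‖X‖ * ‖Y‖ * ‖Z‖ := by ring

end Frobenius

section PermTrace

variable {ι κ R : Type*} [Fintype ι] [Fintype κ] [DecidableEq κ] [CommSemiring R]

/-- `Tr (W_π (M₁ ⊗ ⋯ ⊗ Mₙ))`, written out in the product basis. -/
def permTrace (π : Equiv.Perm κ) (M : κ → Matrix ι ι R) : R :=
  ∑ i : κ → ι, ∏ k, M k (i (π k)) (i k)

lemma permTrace_eq_trace_mul_of_apply_eq_self {π : Equiv.Perm κ} {k : κ} (hk : π k = k)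
    (M : κ → Matrix ι ι R) :
    permTrace π M = (M k).trace *
      permTrace (π.subtypePerm fun _ => π.injective.ne_iff' hk) fun j : {j // j ≠ k} => M j := by
  have hπ (j : {j // j ≠ k}) : π j ≠ k := (π.injective.ne_iff' hk).2 j.2
  have hj (j : {j // j ≠ k}) : (j : κ) ≠ k := j.2
  rw [permTrace, ← (Equiv.funSplitAt k ι).symm.sum_comp, Fintype.sum_prod_type, trace, sum_mul]
  refine sum_congr rfl fun x _ => ?_
  rw [permTrace, mul_sum]
  refine sum_congr rfl fun g _ => ?_
  rw [Fintype.prod_eq_mul_prod_subtype_ne _ k]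
  simp [Equiv.funSplitAt_symm_apply, hk, hπ, hj]

lemma permTrace_conj (σ π : Equiv.Perm κ) (M : κ → Matrix ι ι R) :
    permTrace (σ * π * σ⁻¹) M = permTrace π (M ∘ σ) := by
  refine Fintype.sum_equiv (σ.symm.arrowCongr (Equiv.refl ι)) _ _ fun i => ?_
  rw [← Equiv.prod_comp σ]
  simp

lemma permTrace_finRotate (M : Fin 4 → Matrix ι ι R) :
    permTrace (finRotate 4) M = (M 3 * M 2 * M 1 * M 0).trace := by
  rw [permTrace, sum_pi_fin_four]
  simp only [Fin.prod_univ_four, trace, diag, mul_apply, sum_mul, finRotate_apply, zero_add, cons_val_one, cons_val_zero, Fin.reduceAdd, cons_val]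
  ac_rfl

lemma permTrace_swap_mul_swap (M : Fin 4 → Matrix ι ι R) :
    permTrace (Equiv.swap 0 1 * Equiv.swap 2 3) M = (M 1 * M 0).trace * (M 3 * M 2).trace := by
  rw [permTrace, sum_pi_fin_four]
  simp only [Fin.prod_univ_four, trace, diag, mul_apply, sum_mul_sum, Equiv.Perm.coe_mul,
    Function.comp_apply, ne_eq, Fin.reduceEq, not_false_eq_true, Equiv.swap_apply_of_ne_of_ne,
    Equiv.swap_apply_left, Equiv.swap_apply_right, cons_val_one, cons_val_zero, cons_val]
  refine sum_congr rfl fun _ _ => ?_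
  rw [sum_comm]
  ac_rfl

end PermTrace

lemma norm_permTrace_le_prod_norm {ι 𝕜 : Type*} [Fintype ι] [RCLike 𝕜] {π : Equiv.Perm (Fin 4)}
    (hπ : ∀ k, π k ≠ k) (M : Fin 4 → Matrix ι ι 𝕜) :
    ‖permTrace π M‖ ≤ ∏ k, ‖M k‖ := by
  rcases π.exists_conj_eq_finRotate_or_swap_mul_swap hπ with ⟨σ, rfl⟩ | ⟨σ, rfl⟩ <;>
    rw [permTrace_conj, ← Equiv.prod_comp σ, Fin.prod_univ_four]
  · rw [permTrace_finRotate]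
    exact (norm_trace_mul_mul_mul_le _ _ _ _).trans_eq (by simp only [Function.comp_apply]; ring)
  · rw [permTrace_swap_mul_swap, norm_mul]
    refine (mul_le_mul (norm_trace_mul_le _ _) (norm_trace_mul_le _ _) (norm_nonneg _)
      (by positivity)).trans_eq ?_
    simp only [Function.comp_apply]
    ring

end Matrix

open Matrix

lemma permOp4_apply {d : ℕ} (π : Equiv.Perm (Fin 4)) (i j : Fin 4 → Fin d) :
    permOp4 π i j = if i ∘ π = j then 1 else 0 := by
  simp only [permOp4, of_apply, funext_iff, Function.comp_apply]
  congr 1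
  exact propext ⟨fun h k => by simpa using h (π k), fun h k => by simpa using h (π⁻¹ k)⟩

lemma trace_permOp4_mul {d : ℕ} (π : Equiv.Perm (Fin 4))
    (M : Matrix (Fin 4 → Fin d) (Fin 4 → Fin d) ℂ) :
    (permOp4 π * M).trace = ∑ i, M (i ∘ π) i := by
  simp [trace, mul_apply, permOp4_apply]

lemma trace_permOp4_mul_tensABAB {d : ℕ} (π : Equiv.Perm (Fin 4)) (A B : Matrix (Fin d) (Fin d) ℂ) :
    (permOp4 π * tensABAB A B).trace = permTrace π ![A, B, A, B] := by
  simp only [trace_permOp4_mul, permTrace, tensABAB, of_apply, Fin.prod_univ_four,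
    Function.comp_apply]
  rfl

/-- For traceless Hermitian `A, B` on `ℂ^d` and any permutation
`π ∈ S₄`, `|Tr(W_π (A⊗B⊗A⊗B))| ≤ ‖A‖₂² ‖B‖₂²` where `‖·‖₂` is the
Hilbert–Schmidt norm. -/
theorem stmt11 {d : ℕ} (A B : Matrix (Fin d) (Fin d) ℂ)
    (hA : A.IsHermitian) (hB : B.IsHermitian)
    (hAtr : A.trace = 0) (hBtr : B.trace = 0)
    (π : Equiv.Perm (Fin 4)) :
    ‖(permOp4 π * tensABAB A B).trace‖ ≤
      (A * A).trace.re * (B * B).trace.re := by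
  rw [trace_permOp4_mul_tensABAB, ← RCLike.re_to_complex, ← RCLike.re_to_complex,
    ← hA.frobenius_norm_sq, ← hB.frobenius_norm_sq]
  by_cases hfix : ∃ k, π k = k
  · obtain ⟨k, hk⟩ := hfix
    have htr : (![A, B, A, B] k).trace = 0 := by fin_cases k <;> assumption
    rw [permTrace_eq_trace_mul_of_apply_eq_self hk, htr, zero_mul, norm_zero]
    positivity
  · calc _ ≤ ∏ k, ‖![A, B, A, B] k‖ :=
        norm_permTrace_le_prod_norm (fun k hk => hfix ⟨k, hk⟩) _
      _ = ‖A‖ ^ 2 * ‖B‖ ^ 2 := by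
        simp only [Fin.prod_univ_four, cons_val_zero, cons_val_one, Matrix.cons_val]
        ring
end

section
/- Let σ = |φ⟩⟨φ| be a pure state on (ℂ²)^⊗n with d = 2ⁿ, let 𝒫̄ₙ denote the set of n-qubit Pauli operators (d² tensor products of I, X, Y, Z), and let P ∈ 𝒫̄ₙ with P ≠ I. Define η = 1 − (Tr(σP))² and K_σ(P) = Σ_{Q ∈ 𝒫̄ₙ : QP = −PQ} (Tr(σQ))⁴. Then K_σ(P) ≤ d η² / 2. -/
open scoped Classical

/-- The single-qubit Pauli matrices `I, X, Y, Z`. -/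
noncomputable def pauli1 : Fin 4 → Matrix (Fin 2) (Fin 2) ℂ :=
  ![1, !![0, 1; 1, 0], !![0, -Complex.I; Complex.I, 0], !![1, 0; 0, -1]]

/-- The `n`-qubit Pauli operator labelled by `f : Fin n → Fin 4`, i.e. the tensor
product `⊗ₖ pauli1 (f k)`, written as a matrix on `(ℂ²)^⊗n` with the product basis
indexed by `Fin n → Fin 2`. -/
noncomputable def pauliN {n : ℕ} (f : Fin n → Fin 4) :
    Matrix (Fin n → Fin 2) (Fin n → Fin 2) ℂ :=
  Matrix.of fun i j => ∏ k, pauli1 (f k) (i k) (j k)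

/-! Let `P = pauliN f`, `t = Tr(σP)` and `b_Q = Tr(σQ)`. If `Q` anticommutes with `P`, then
`(tP + b_Q Q)² = (t² + b_Q²)·1`, so the variance inequality `Tr(σX)² ≤ Tr(σX²)` for the pure
state `σ` gives `t² + b_Q² ≤ 1`, i.e. `b_Q² ≤ η`; hence `K_σ(P) ≤ η · Σ_Q b_Q²`.
The coefficients `b_Q` of the anticommuting `Q` are exactly the Pauli coefficients of
`R = (σ - PσP)/2`, and the other coefficients of `R` vanish, so Parseval's identity
`Σ_Q Tr(AQ) Tr(BQ) = d Tr(AB)` gives `Σ_Q b_Q² = d Tr(R²) = d (1 - Tr(σPσP))/2`,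
which is at most `d (1 - t²)/2 = d η/2`. -/

namespace Matrix

section PiKron

variable {ι m R : Type*} [Fintype ι]

def piKron [CommMonoid R] (A : ι → Matrix m m R) : Matrix (ι → m) (ι → m) R :=
  of fun i j => ∏ k, A k (i k) (j k)

variable [CommSemiring R]

theorem piKron_mul [Fintype m] [DecidableEq ι] (A B : ι → Matrix m m R) :
    piKron A * piKron B = piKron fun k => A k * B k := by
  ext i j
  simp only [piKron, mul_apply, of_apply, Fintype.prod_sum, Finset.prod_mul_distrib]

theorem piKron_one [DecidableEq m] : piKron (fun _ : ι => (1 : Matrix m m R)) = 1 := by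
  ext i j
  simp [piKron, one_apply, Finset.prod_boole, funext_iff]

theorem piKron_smul (c : ι → R) (A : ι → Matrix m m R) :
    piKron (fun k => c k • A k) = (∏ k, c k) • piKron A := by
  ext i j
  simp [piKron, Finset.prod_mul_distrib]

theorem conjTranspose_piKron [StarRing R] (A : ι → Matrix m m R) :
    (piKron A)ᴴ = piKron fun k => (A k)ᴴ := by
  ext i j
  simp [piKron, star_prod]

theorem piKron_mul_piKron_eq_smul [Fintype m] [DecidableEq ι] {A B : ι → Matrix m m R}
    (ε : ι → R) (h : ∀ k, B k * A k = ε k • (A k * B k)) :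
    piKron B * piKron A = (∏ k, ε k) • (piKron A * piKron B) := by
  simp only [piKron_mul, h, piKron_smul]

theorem sum_piKron_apply_mul_piKron_apply [Fintype m] [DecidableEq ι] [DecidableEq m]
    {κ : Type*} [Fintype κ] (A : κ → Matrix m m R) (c : R)
    (hA : ∀ a b a' b', ∑ s, A s a b * A s a' b' = if a = b' ∧ b = a' then c else 0)
    (a b a' b' : ι → m) :
    ∑ g : ι → κ, piKron (fun k => A (g k)) a b * piKron (fun k => A (g k)) a' b' =
      if a = b' ∧ b = a' then c ^ Fintype.card ι else 0 := by
  simp only [piKron, of_apply, ← Finset.prod_mul_distrib]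
  rw [← Fintype.prod_sum fun k s => A s (a k) (b k) * A s (a' k) (b' k)]
  simp [hA, Finset.prod_ite_zero, funext_iff, forall_and]

end PiKron

theorem sum_trace_mul_mul_trace_mul {m G R : Type*} [Fintype m] [DecidableEq m] [Fintype G]
    [CommSemiring R] (B : G → Matrix m m R) (c : R)
    (hB : ∀ a b a' b', ∑ g, B g a b * B g a' b' = if a = b' ∧ b = a' then c else 0)
    (X Y : Matrix m m R) :
    ∑ g, (X * B g).trace * (Y * B g).trace = c * (X * Y).trace := by
  calc ∑ g, (X * B g).trace * (Y * B g).trace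
      = ∑ g, ∑ a, ∑ a', ∑ b, ∑ b', X a b * Y a' b' * (B g b a * B g b' a') := by
        simp only [trace, diag, mul_apply, Finset.sum_mul_sum, mul_mul_mul_comm]
    _ = ∑ a, ∑ a', ∑ b, ∑ b', X a b * Y a' b' * ∑ g, B g b a * B g b' a' := by
        simp only [Finset.mul_sum]
        simp_rw [Finset.sum_comm (s := (Finset.univ : Finset G))]
    _ = c * (X * Y).trace := by
        simp [hB, ite_and, trace, mul_apply, Finset.mul_sum, mul_comm]

end Matrix

open Matrix

theorem pauli1_conjTranspose (s : Fin 4) : (pauli1 s)ᴴ = pauli1 s := by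
  fin_cases s <;> ext i j <;> fin_cases i <;> fin_cases j <;> simp [pauli1]

theorem pauli1_mul_self (s : Fin 4) : pauli1 s * pauli1 s = 1 := by
  fin_cases s <;> ext i j <;> fin_cases i <;> fin_cases j <;>
    simp [pauli1, mul_apply, Fin.sum_univ_two, one_apply]

theorem pauli1_mul_pauli1_eq_sign_smul (s t : Fin 4) :
    ∃ ε : ℂ, (ε = 1 ∨ ε = -1) ∧ pauli1 t * pauli1 s = ε • (pauli1 s * pauli1 t) := by
  fin_cases s <;> fin_cases t <;>
    first
    | (refine ⟨1, .inl rfl, ?_⟩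
       ext i j
       fin_cases i <;> fin_cases j <;> simp [pauli1, mul_apply, Fin.sum_univ_two]
       done)
    | (refine ⟨-1, .inr rfl, ?_⟩
       ext i j
       fin_cases i <;> fin_cases j <;> simp [pauli1, mul_apply, Fin.sum_univ_two])

theorem sum_pauli1_apply_mul_pauli1_apply (a b a' b' : Fin 2) :
    ∑ s, pauli1 s a b * pauli1 s a' b' = if a = b' ∧ b = a' then 2 else 0 := by
  fin_cases a <;> fin_cases b <;> fin_cases a' <;> fin_cases b' <;>
    simp [pauli1, Fin.sum_univ_four] <;> norm_num

section Pauli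

variable {n : ℕ}

theorem pauliN_eq_piKron (f : Fin n → Fin 4) : pauliN f = piKron fun k => pauli1 (f k) := rfl

theorem isHermitian_pauliN (f : Fin n → Fin 4) : (pauliN f).IsHermitian := by
  simp only [IsHermitian, pauliN_eq_piKron, conjTranspose_piKron, pauli1_conjTranspose]

theorem pauliN_mul_self (f : Fin n → Fin 4) : pauliN f * pauliN f = 1 := by
  simp only [pauliN_eq_piKron, piKron_mul, pauli1_mul_self, piKron_one]

theorem pauliN_commute_or_anticommute (f g : Fin n → Fin 4) :
    pauliN g * pauliN f = pauliN f * pauliN g ∨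
      pauliN g * pauliN f = -(pauliN f * pauliN g) := by
  choose ε hε_sign hε using fun k => pauli1_mul_pauli1_eq_sign_smul (f k) (g k)
  have hprod : ∏ k, ε k = 1 ∨ ∏ k, ε k = -1 :=
    Finset.prod_induction _ (fun x => x = 1 ∨ x = -1)
      (by rintro _ _ (rfl | rfl) (rfl | rfl) <;> norm_num) (.inl rfl) fun k _ => hε_sign k
  simp only [pauliN_eq_piKron, piKron_mul_piKron_eq_smul ε hε]
  rcases hprod with h | h <;> simp [h]

theorem sum_trace_mul_pauliN_mul_trace_mul_pauliN
    (X Y : Matrix (Fin n → Fin 2) (Fin n → Fin 2) ℂ) :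
    ∑ g, (X * pauliN g).trace * (Y * pauliN g).trace = 2 ^ n * (X * Y).trace := by
  simpa [pauliN_eq_piKron] using sum_trace_mul_mul_trace_mul _ _
    (sum_piKron_apply_mul_piKron_apply _ _ sum_pauli1_apply_mul_pauli1_apply) X Y

end Pauli

section PureState

variable {m : Type*} [Fintype m]

open scoped ComplexOrder in
theorem re_trace_mul_conjTranspose_nonneg (A : Matrix m m ℂ) : 0 ≤ (A * Aᴴ).trace.re :=
  (Complex.nonneg_iff.mp (posSemidef_self_mul_conjTranspose A).trace_nonneg).1

theorem im_trace_mul_eq_zero {A B : Matrix m m ℂ} (hA : A.IsHermitian) (hB : B.IsHermitian) :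
    (A * B).trace.im = 0 := by
  rw [← Complex.conj_eq_iff_im, ← Complex.star_def, ← trace_conjTranspose, conjTranspose_mul,
    hA.eq, hB.eq, trace_mul_comm]

theorem trace_mul_mul_of_mul_self {R : Type*} [CommSemiring R] {σ : Matrix m m R}
    (hσ2 : σ * σ = σ) (A : Matrix m m R) : (σ * A * σ).trace = (σ * A).trace := by
  rw [trace_mul_cycle, hσ2]

variable {σ X : Matrix m m ℂ} (hσ : σ.IsHermitian) (hσ2 : σ * σ = σ)
include hσ hσ2

theorem re_trace_mul_mul_nonneg (hX : X.IsHermitian) : 0 ≤ (σ * X * X).trace.re := by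
  have h : (σ * X) * (σ * X)ᴴ = σ * (X * X) * σ := by
    rw [conjTranspose_mul, hσ.eq, hX.eq]; noncomm_ring
  have := re_trace_mul_conjTranspose_nonneg (σ * X)
  rwa [h, trace_mul_mul_of_mul_self hσ2, ← Matrix.mul_assoc] at this

theorem re_trace_mul_mul_mul_mul_nonneg (hX : X.IsHermitian) :
    0 ≤ (σ * X * σ * X).trace.re := by
  have h : (σ * X * σ) * (σ * X * σ)ᴴ = σ * (X * σ * X) * σ := by
    calc (σ * X * σ) * (σ * X * σ)ᴴ = σ * X * (σ * σ) * X * σ := by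
          rw [conjTranspose_mul, conjTranspose_mul, hσ.eq, hX.eq]; noncomm_ring
      _ = σ * (X * σ * X) * σ := by rw [hσ2]; noncomm_ring
  have := re_trace_mul_conjTranspose_nonneg (σ * X * σ)
  rwa [h, trace_mul_mul_of_mul_self hσ2, ← Matrix.mul_assoc, ← Matrix.mul_assoc] at this

variable [DecidableEq m] (hσtr : σ.trace = 1)
include hσtr

-- The variance of `X` in the state `σ` is `Tr(σY²) ≥ 0` for `Y = X - Tr(σX)·1`.
theorem sq_re_trace_mul_le_re_trace_mul_mul (hX : X.IsHermitian) :
    (σ * X).trace.re ^ 2 ≤ (σ * X * X).trace.re := by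
  set t := (σ * X).trace.re
  have hY : (X - t • 1).IsHermitian := hX.sub (isHermitian_one.smul (.all t))
  have h : σ * (X - t • 1) * (X - t • 1) = σ * X * X - (2 * t) • (σ * X) + t ^ 2 • σ := by
    simp only [Matrix.mul_sub, Matrix.sub_mul, Matrix.mul_smul, Matrix.smul_mul, Matrix.mul_one]
    module
  have := re_trace_mul_mul_nonneg hσ hσ2 hY
  rw [h, trace_add, trace_sub, trace_smul, trace_smul, hσtr] at this
  simp only [Complex.add_re, Complex.sub_re, Complex.real_smul, Complex.re_ofReal_mul,
    Complex.one_re] at this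
  nlinarith

theorem sq_re_trace_mul_le_re_trace_mul_mul_mul_mul (hX : X.IsHermitian) :
    (σ * X).trace.re ^ 2 ≤ (σ * X * σ * X).trace.re := by
  set t := (σ * X).trace.re
  have hY : (X - t • 1).IsHermitian := hX.sub (isHermitian_one.smul (.all t))
  have h : σ * (X - t • 1) * σ * (X - t • 1) =
      σ * X * σ * X - t • (σ * σ * X) - t • (σ * X * σ) + t ^ 2 • (σ * σ) := by
    simp only [Matrix.mul_sub, Matrix.sub_mul, Matrix.mul_smul, Matrix.smul_mul, Matrix.mul_one]
    module
  have := re_trace_mul_mul_mul_mul_nonneg hσ hσ2 hY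
  rw [h, trace_add, trace_sub, trace_sub, trace_smul, trace_smul, trace_smul,
    trace_mul_mul_of_mul_self hσ2, hσ2, hσtr] at this
  simp only [Complex.add_re, Complex.sub_re, Complex.real_smul, Complex.re_ofReal_mul,
    Complex.one_re] at this
  nlinarith

theorem sq_re_trace_mul_add_sq_re_trace_mul_le_one {P Q : Matrix m m ℂ} (hP : P.IsHermitian)
    (hQ : Q.IsHermitian) (hP2 : P * P = 1) (hQ2 : Q * Q = 1) (hPQ : Q * P = -(P * Q)) :
    (σ * P).trace.re ^ 2 + (σ * Q).trace.re ^ 2 ≤ 1 := by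
  set t := (σ * P).trace.re
  set b := (σ * Q).trace.re
  have hX : (t • P + b • Q).IsHermitian := (hP.smul (.all t)).add (hQ.smul (.all b))
  have hXX : (t • P + b • Q) * (t • P + b • Q) = (t ^ 2 + b ^ 2) • (1 : Matrix m m ℂ) :=
    calc _ = t ^ 2 • (P * P) + (t * b) • (P * Q + Q * P) + b ^ 2 • (Q * Q) := by
          simp only [Matrix.add_mul, Matrix.mul_add, Matrix.smul_mul, Matrix.mul_smul]; module
      _ = _ := by rw [hP2, hQ2, hPQ, add_neg_cancel, smul_zero, add_zero, add_smul]
  have := sq_re_trace_mul_le_re_trace_mul_mul hσ hσ2 hσtr hX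
  rw [Matrix.mul_assoc, hXX] at this
  simp only [Matrix.mul_add, Matrix.mul_smul, Matrix.mul_one, trace_add, trace_smul, hσtr,
    Complex.add_re, Complex.real_smul, Complex.re_ofReal_mul, Complex.one_re] at this
  nlinarith [sq_nonneg t, sq_nonneg b]

end PureState

section AnticommutingPart

variable {m : Type*} [Fintype m] [DecidableEq m]

-- For a pure state `σ = |φ⟩⟨φ|` this is the paper's `√η · M`.
noncomputable def anticommutingPart (P X : Matrix m m ℂ) : Matrix m m ℂ :=
  (2⁻¹ : ℂ) • (X - P * X * P)

variable {P Q : Matrix m m ℂ}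

theorem trace_anticommutingPart_mul_of_commute (hP2 : P * P = 1) (h : Q * P = P * Q)
    (X : Matrix m m ℂ) : (anticommutingPart P X * Q).trace = 0 := by
  have hconj : (P * X * P * Q).trace = (X * Q).trace := by
    simp only [Matrix.mul_assoc]; rw [trace_mul_comm]; simp only [Matrix.mul_assoc]
    rw [h, ← Matrix.mul_assoc P, hP2, Matrix.one_mul]
  rw [anticommutingPart, Matrix.smul_mul, trace_smul, Matrix.sub_mul, trace_sub, hconj, sub_self,
    smul_zero]

theorem trace_anticommutingPart_mul_of_anticommute (hP2 : P * P = 1) (h : Q * P = -(P * Q))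
    (X : Matrix m m ℂ) : (anticommutingPart P X * Q).trace = (X * Q).trace := by
  have hconj : (P * X * P * Q).trace = -(X * Q).trace := by
    simp only [Matrix.mul_assoc]; rw [trace_mul_comm]; simp only [Matrix.mul_assoc]
    rw [h, Matrix.mul_neg, ← Matrix.mul_assoc P, hP2, Matrix.one_mul, Matrix.mul_neg, trace_neg]
  rw [anticommutingPart, Matrix.smul_mul, trace_smul, Matrix.sub_mul, trace_sub, hconj,
    smul_eq_mul]
  ring

theorem trace_anticommutingPart_mul_self {σ : Matrix m m ℂ} (hσ2 : σ * σ = σ)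
    (hσtr : σ.trace = 1) (hP2 : P * P = 1) :
    (anticommutingPart P σ * anticommutingPart P σ).trace = (1 - (σ * P * σ * P).trace) / 2 := by
  have h : anticommutingPart P σ * anticommutingPart P σ =
      (4⁻¹ : ℂ) • (σ * σ - σ * P * σ * P - P * (σ * P * σ) + P * (σ * (P * P) * σ) * P) := by
    simp only [anticommutingPart, Matrix.smul_mul, Matrix.mul_smul, Matrix.sub_mul,
      Matrix.mul_sub, Matrix.mul_assoc]
    module
  have e1 : (P * (σ * P * σ)).trace = (σ * P * σ * P).trace := by
    rw [trace_mul_comm, Matrix.mul_assoc]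
  have e2 : (P * (σ * (P * P) * σ) * P).trace = 1 := by
    rw [trace_mul_comm, ← Matrix.mul_assoc, hP2, Matrix.one_mul, Matrix.mul_one, hσ2, hσtr]
  rw [h, trace_smul, trace_add, trace_sub, trace_sub, e1, e2, hσ2, hσtr, smul_eq_mul]
  ring

end AnticommutingPart

section PauliExpansion

variable {n : ℕ}

theorem trace_anticommutingPart_pauliN_mul_pauliN (f g : Fin n → Fin 4)
    (X : Matrix (Fin n → Fin 2) (Fin n → Fin 2) ℂ) :
    (anticommutingPart (pauliN f) X * pauliN g).trace =
      if pauliN g * pauliN f = -(pauliN f * pauliN g) then (X * pauliN g).trace else 0 := by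
  split_ifs with h
  · exact trace_anticommutingPart_mul_of_anticommute (pauliN_mul_self f) h X
  · exact trace_anticommutingPart_mul_of_commute (pauliN_mul_self f)
      ((pauliN_commute_or_anticommute f g).resolve_right h) X

theorem sum_sq_re_trace_mul_pauliN_of_anticommute
    {σ : Matrix (Fin n → Fin 2) (Fin n → Fin 2) ℂ} (hσ : σ.IsHermitian) (hσ2 : σ * σ = σ)
    (hσtr : σ.trace = 1) (f : Fin n → Fin 4) :
    ∑ g ∈ Finset.univ.filter (fun g => pauliN g * pauliN f = -(pauliN f * pauliN g)),
        (σ * pauliN g).trace.re ^ 2 =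
      2 ^ n * (1 - (σ * pauliN f * σ * pauliN f).trace.re) / 2 := by
  have hparseval := sum_trace_mul_pauliN_mul_trace_mul_pauliN
    (anticommutingPart (pauliN f) σ) (anticommutingPart (pauliN f) σ)
  simp only [trace_anticommutingPart_pauliN_mul_pauliN, ite_zero_mul_ite_zero, and_self,
    ← Finset.sum_filter, trace_anticommutingPart_mul_self hσ2 hσtr (pauliN_mul_self f)]
    at hparseval
  calc _ = (∑ g ∈ Finset.univ.filter (fun g => pauliN g * pauliN f = -(pauliN f * pauliN g)),
        (σ * pauliN g).trace * (σ * pauliN g).trace).re := by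
        rw [Complex.re_sum]
        refine Finset.sum_congr rfl fun g _ => ?_
        rw [Complex.mul_re, im_trace_mul_eq_zero hσ (isHermitian_pauliN g)]
        ring
    _ = _ := by
        rw [hparseval, ← Complex.ofReal_ofNat, ← Complex.ofReal_pow, Complex.re_ofReal_mul,
          Complex.div_ofReal_re, Complex.sub_re, Complex.one_re]
        ring

end PauliExpansion

theorem stmt12_general {n : ℕ} (σ : Matrix (Fin n → Fin 2) (Fin n → Fin 2) ℂ)
    (hσH : σ.IsHermitian) (hσ2 : σ * σ = σ) (hσtr : σ.trace = 1)
    (f : Fin n → Fin 4)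
    (η : ℝ) (hη : η = 1 - ((σ * pauliN f).trace.re) ^ 2) :
    ∑ g ∈ Finset.univ.filter
        (fun g : Fin n → Fin 4 => pauliN g * pauliN f = -(pauliN f * pauliN g)),
      ((σ * pauliN g).trace.re) ^ 4 ≤ (2 ^ n : ℝ) * η ^ 2 / 2 := by
  set S := Finset.univ.filter fun g : Fin n → Fin 4 =>
    pauliN g * pauliN f = -(pauliN f * pauliN g)
  have hpoint : ∀ g ∈ S, (σ * pauliN g).trace.re ^ 2 ≤ η := fun g hg => by
    have := sq_re_trace_mul_add_sq_re_trace_mul_le_one hσH hσ2 hσtr (isHermitian_pauliN f)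
      (isHermitian_pauliN g) (pauliN_mul_self f) (pauliN_mul_self g) (Finset.mem_filter.mp hg).2
    linarith
  have hsum : ∑ g ∈ S, (σ * pauliN g).trace.re ^ 2 ≤ 2 ^ n * η / 2 := by
    rw [sum_sq_re_trace_mul_pauliN_of_anticommute hσH hσ2 hσtr f, hη]
    gcongr
    exact sq_re_trace_mul_le_re_trace_mul_mul_mul_mul hσH hσ2 hσtr (isHermitian_pauliN f)
  have hη0 : 0 ≤ η := by
    have := (Finset.sum_nonneg fun g _ => sq_nonneg (σ * pauliN g).trace.re).trans hsum
    nlinarith [pow_pos (two_pos : (0 : ℝ) < 2) n]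
  calc ∑ g ∈ S, (σ * pauliN g).trace.re ^ 4
      ≤ ∑ g ∈ S, η * (σ * pauliN g).trace.re ^ 2 := Finset.sum_le_sum fun g hg => by
        have := mul_le_mul_of_nonneg_right (hpoint g hg) (sq_nonneg ((σ * pauliN g).trace.re))
        linarith
    _ = η * ∑ g ∈ S, (σ * pauliN g).trace.re ^ 2 := Finset.mul_sum _ _ _ |>.symm
    _ ≤ η * (2 ^ n * η / 2) := mul_le_mul_of_nonneg_left hsum hη0
    _ = 2 ^ n * η ^ 2 / 2 := by ring

/-- For a pure state `σ` on `(ℂ²)^⊗n` (`d = 2ⁿ`) and a nontrivial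
`n`-qubit Pauli operator `P = pauliN f`, setting `η = 1 − (Tr(σP))²` and
`K_σ(P) = Σ_{Q Pauli, QP = −PQ} (Tr(σQ))⁴`, one has `K_σ(P) ≤ d η² / 2`. -/
theorem stmt12 {n : ℕ} (σ : Matrix (Fin n → Fin 2) (Fin n → Fin 2) ℂ)
    (hσH : σ.IsHermitian) (hσ2 : σ * σ = σ) (hσtr : σ.trace = 1)
    (f : Fin n → Fin 4) (hf : f ≠ fun _ => 0)
    (η : ℝ) (hη : η = 1 - ((σ * pauliN f).trace.re) ^ 2) :
    ∑ g ∈ Finset.univ.filter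
        (fun g : Fin n → Fin 4 => pauliN g * pauliN f = -(pauliN f * pauliN g)),
      ((σ * pauliN g).trace.re) ^ 4 ≤ (2 ^ n : ℝ) * η ^ 2 / 2 :=
  stmt12_general σ hσH hσ2 hσtr f η hη
end
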